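/- arXiv:1510.07573 — 2 statements merged into one kernel-verified Lean document; each statement's English description precedes it below -/
import Mathlib

section
/- Let agent f1 move with speed v¹ > 0 along the positive y-direction and agent f2 move with speed v² > 0 in direction (−sin Ψ, cos Ψ), with sin Ψ ≠ 0, so their straight-line trajectories intersect at the origin. Suppose f2 reaches the origin strictly before f1 (i.e., at the moment f2 is at the origin, f1 is at (0, d) with d < 0). Then at every time before f2 reaches the origin, the azimuthal position φ₂₁ of f2 relative to f1 (measured with φ = 0 pointing along f1's heading, positive angles to f1's left) and the angular velocity φ̇₂₁ satisfy φ̇₂₁ · φ₂₁ ≤ 0 (regressive motion), while at every time after f2 passes the origin, φ̇₂₁ · φ₂₁ ≥ 0 (progressive motion). -/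
open Real

/-- The azimuth of a planar vector `p` measured from the heading direction (0,1),
positive to the left, taking values in [-π, π). -/
noncomputable def azimuth (p : ℝ × ℝ) : ℝ :=
  if Complex.arg ⟨p.2, -p.1⟩ = π then -π else Complex.arg ⟨p.2, -p.1⟩

/-!
Write the relative position `p = x² − x¹` as the complex number `w = p.2 − i p.1`, so that
the azimuth is `arg w`. With `A = v² sin Ψ`, `B = v² cos Ψ − v¹` and `c = −d > 0`, the path
is the line `w t = c + t (B + A i)`. It stays in the slit plane (it meets the real axis only
at `t = 0`, at `c > 0`), where `arg` is smooth with `d/dt arg w = Im (w' / w) = c A / |w|²`.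
Since `arg w` has the sign of `Im w = t A`, the product `φ̇ φ` has the sign of `t`.
-/

open Complex

theorem azimuth_eq_arg {p : ℝ × ℝ} (hp : (⟨p.2, -p.1⟩ : ℂ) ∈ slitPlane) :
    azimuth p = arg ⟨p.2, -p.1⟩ :=
  if_neg (slitPlane_arg_ne_pi hp)

theorem HasDerivAt.carg {f : ℝ → ℂ} {f' : ℂ} {x : ℝ} (hf : HasDerivAt f f' x)
    (hx : f x ∈ slitPlane) : HasDerivAt (fun t => arg (f t)) (f' / f x).im x := by
  simpa only [Function.comp_def, imCLM_apply, log_im] using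
    imCLM.hasFDerivAt.comp_hasDerivAt x (hf.clog_real hx)

theorem im_mul_arg_nonneg (z : ℂ) : 0 ≤ z.im * arg z := by
  rcases le_or_gt 0 z.im with h | h
  · exact mul_nonneg h (arg_nonneg_iff.mpr h)
  · exact mul_nonneg_of_nonpos_of_nonpos h.le (arg_neg_iff.mpr h).le

theorem ofReal_add_mul_mem_slitPlane {c : ℝ} (hc : 0 < c) {u : ℂ} (hu : u.im ≠ 0) (t : ℝ) :
    (c + t * u : ℂ) ∈ slitPlane := by
  rcases eq_or_ne t 0 with rfl | ht
  · simpa using hc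
  · exact mem_slitPlane_iff.mpr (Or.inr (by simpa using mul_ne_zero ht hu))

theorem hasDerivAt_arg_ofReal_add_mul {c : ℝ} (hc : 0 < c) {u : ℂ} (hu : u.im ≠ 0) (t : ℝ) :
    HasDerivAt (fun s : ℝ => arg (c + s * u)) (c * u.im / normSq (c + t * u)) t := by
  have hline : HasDerivAt (fun s : ℝ => (c + s * u : ℂ)) u t := by
    simpa using ((hasDerivAt_id t).ofReal_comp.mul_const u).const_add (c : ℂ)
  convert hline.carg (ofReal_add_mul_mem_slitPlane hc hu t) using 1
  simp only [div_im, add_re, add_im, ofReal_re, ofReal_im, mul_re, mul_im]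
  ring

theorem mul_deriv_arg_mul_arg_nonneg {c : ℝ} (hc : 0 < c) (u : ℂ) (t : ℝ) :
    0 ≤ t * (c * u.im / normSq (c + t * u) * arg (c + t * u)) := by
  have him : (c + t * u : ℂ).im = t * u.im := by simp
  calc 0 ≤ c / normSq (c + t * u) * ((c + t * u : ℂ).im * arg (c + t * u)) :=
        mul_nonneg (div_nonneg hc.le (normSq_nonneg _)) (im_mul_arg_nonneg _)
    _ = _ := by rw [him]; ring

theorem regressive_before_progressive_after_general
    (v1 v2 Ψ d : ℝ) (hv2 : 0 < v2) (hΨ : Real.sin Ψ ≠ 0) (hd : d < 0)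
    (x1 x2 : ℝ → ℝ × ℝ)
    (hx1 : ∀ t, x1 t = (0, d + v1 * t))
    (hx2 : ∀ t, x2 t = (-(v2 * t) * Real.sin Ψ, (v2 * t) * Real.cos Ψ))
    (φ φdot : ℝ → ℝ)
    (hφ : ∀ t, φ t = azimuth ((x2 t).1 - (x1 t).1, (x2 t).2 - (x1 t).2))
    (hder : ∀ t, HasDerivAt φ (φdot t) t) :
    (∀ t, t < 0 → φdot t * φ t ≤ 0) ∧ (∀ t, 0 < t → 0 ≤ φdot t * φ t) := by
  set u : ℂ := ⟨v2 * Real.cos Ψ - v1, v2 * Real.sin Ψ⟩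
  have hu : u.im ≠ 0 := mul_ne_zero hv2.ne' hΨ
  have hc : 0 < -d := neg_pos.mpr hd
  have hrel : ∀ t : ℝ,
      (⟨(x2 t).2 - (x1 t).2, -((x2 t).1 - (x1 t).1)⟩ : ℂ) = ↑(-d) + t * u := by
    intro t
    apply Complex.ext <;> simp [hx1, hx2, u] <;> ring
  have hφ_eq : φ = fun t : ℝ => arg (↑(-d) + t * u) := by
    funext t
    rw [hφ, azimuth_eq_arg (by simpa only [hrel] using ofReal_add_mul_mem_slitPlane hc hu t)]
    simp only [hrel]
  have hφdot : ∀ t, φdot t = -d * u.im / normSq (↑(-d) + t * u) := fun t =>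
    (hder t).unique (hφ_eq ▸ hasDerivAt_arg_ofReal_add_mul hc hu t)
  have hsign : ∀ t, 0 ≤ t * (φdot t * φ t) := fun t => by
    simpa only [hφdot, hφ_eq] using mul_deriv_arg_mul_arg_nonneg hc u t
  exact ⟨fun t ht => nonpos_of_mul_nonneg_right (hsign t) ht,
    fun t ht => nonneg_of_mul_nonneg_right (hsign t) ht⟩

/-- f1 moves with speed v¹ > 0 along the positive y-direction, f2 with speed
v² > 0 in direction (−sin Ψ, cos Ψ), sin Ψ ≠ 0; trajectories intersect at the origin; f2 is
at the origin at time 0 while f1 is then at (0, d), d < 0 (so f2 arrives first).  Then at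
every time before f2 reaches the origin the azimuth φ₂₁ of f2 relative to f1 and its angular
velocity satisfy φ̇₂₁·φ₂₁ ≤ 0 (regressive motion), and at every time afterwards
φ̇₂₁·φ₂₁ ≥ 0 (progressive motion). -/
theorem regressive_before_progressive_after
    (v1 v2 Ψ d : ℝ) (hv1 : 0 < v1) (hv2 : 0 < v2) (hΨ : Real.sin Ψ ≠ 0) (hd : d < 0)
    (x1 x2 : ℝ → ℝ × ℝ)
    (hx1 : ∀ t, x1 t = (0, d + v1 * t))
    (hx2 : ∀ t, x2 t = (-(v2 * t) * Real.sin Ψ, (v2 * t) * Real.cos Ψ))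
    (hnc : ∀ t, x2 t ≠ x1 t)
    (φ φdot : ℝ → ℝ)
    (hφ : ∀ t, φ t = azimuth ((x2 t).1 - (x1 t).1, (x2 t).2 - (x1 t).2))
    (hder : ∀ t, HasDerivAt φ (φdot t) t) :
    (∀ t, t < 0 → φdot t * φ t ≤ 0) ∧ (∀ t, 0 < t → 0 ≤ φdot t * φ t) :=
  regressive_before_progressive_after_general v1 v2 Ψ d hv2 hΨ hd x1 x2 hx1 hx2 φ φdot hφ hder
end

section
/- Consider an observer at the origin with heading (0,1) and GRM cone of half-angle CVA ∈ (0, π/2), moving with velocity v(sin α, cos α) toward the wall y = y₀ > 0, with 0 < α < π/2. If α < CVA, then the impact point lies strictly inside the GRM cone, and there exist wall-points within the cone (azimuth in (−CVA, CVA)) whose angular velocity magnitude exceeds any given threshold T > 0 for y₀ sufficiently small. Hence for every finite GRM threshold the agent perceives above-threshold GRM before reaching the wall. -/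
open Real

/-! The impact point (y₀ tan α, y₀) is seen at azimuth −α, inside the cone since α < CVA.
The wall-point straight ahead, (0, y₀), is seen at azimuth 0 and sweeps with angular velocity
−v sin α / y₀, which is unbounded as the wall approaches. -/

lemma azimuth_mul_sin_mul_cos {r θ : ℝ} (hr : 0 < r) (hθ : θ ∈ Set.Ioc (-π) π) :
    azimuth (r * sin θ, r * cos θ) = -θ := by
  rcases hθ.2.lt_or_eq with hθπ | rfl
  · have harg : Complex.arg ⟨r * cos θ, -(r * sin θ)⟩ = -θ := by
      have hpolar : (⟨r * cos θ, -(r * sin θ)⟩ : ℂ) =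
          r * (Complex.cos (-θ : ℝ) + Complex.sin (-θ : ℝ) * Complex.I) := by
        apply Complex.ext <;> simp [← Complex.ofReal_cos, ← Complex.ofReal_sin]
      rw [hpolar]
      exact Complex.arg_mul_cos_add_sin_mul_I hr ⟨by linarith, by linarith [hθ.1]⟩
    rw [azimuth, harg, if_neg (by linarith [hθ.1])]
  · have harg : Complex.arg ⟨r * cos π, -(r * sin π)⟩ = π := by
      have hneg : (⟨r * cos π, -(r * sin π)⟩ : ℂ) = ((-r : ℝ) : ℂ) := by
        apply Complex.ext <;> simp
      rw [hneg, Complex.arg_ofReal_of_neg (by linarith)]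
    rw [azimuth, if_pos harg]

/-- An observer at the origin with heading (0,1) and GRM cone of half-angle
CVA ∈ (0, π/2) moves with velocity u = v(sin α, cos α) (v > 0, 0 < α < π/2, α < CVA)
toward the wall y = y₀ > 0.  Then the impact point (y₀ tan α, y₀) lies strictly inside the
GRM cone, and for every threshold T > 0 there is δ > 0 such that for every
y₀ ∈ (0, δ) some wall-point (x, y₀) has azimuth in (−CVA, CVA), angular velocity
φ̇ = ⟨(−u)^⊥, (x, y₀)⟩/‖(x, y₀)‖² (with (a,b)^⊥ = (−b, a)) of magnitude exceeding T, and
satisfies the GRM condition (φ̇ > 0 ∧ azimuth ≤ CVA) ∨ (φ̇ < 0 ∧ −CVA ≤ azimuth):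
the agent perceives above-threshold GRM before reaching the wall. -/
theorem GRM_perceived_before_wall
    (v α CVA : ℝ) (hv : 0 < v) (hα : α ∈ Set.Ioo 0 (π / 2))
    (hCVA : CVA ∈ Set.Ioo 0 (π / 2)) (hαCVA : α < CVA)
    (u : ℝ × ℝ) (hu : u = (v * Real.sin α, v * Real.cos α))
    (φdot : ℝ → ℝ → ℝ)
    (hφdot : ∀ x y : ℝ,
      φdot x y = ((-(-u).2) * x + (-u).1 * y) / (x ^ 2 + y ^ 2)) :
    (∀ y₀ : ℝ, 0 < y₀ → |azimuth (y₀ * Real.tan α, y₀)| < CVA) ∧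
    (∀ T : ℝ, 0 < T → ∃ δ : ℝ, 0 < δ ∧ ∀ y₀ : ℝ, 0 < y₀ → y₀ < δ → ∃ x : ℝ,
      azimuth (x, y₀) ∈ Set.Ioo (-CVA) CVA ∧
      T < |φdot x y₀| ∧
      ((0 < φdot x y₀ ∧ azimuth (x, y₀) ≤ CVA) ∨
       (φdot x y₀ < 0 ∧ -CVA ≤ azimuth (x, y₀)))) := by
  obtain ⟨hα0, hα2⟩ := hα
  have hcos : 0 < cos α := cos_pos_of_mem_Ioo ⟨by linarith [pi_pos], hα2⟩
  have hsin : 0 < sin α := sin_pos_of_pos_of_lt_pi hα0 (by linarith [pi_pos])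
  have hαmem : α ∈ Set.Ioc (-π) π := ⟨by linarith [pi_pos], by linarith [pi_pos]⟩
  have haz_ahead (y₀ : ℝ) (hy₀ : 0 < y₀) : azimuth (0, y₀) = 0 := by
    simpa using azimuth_mul_sin_mul_cos hy₀ ⟨neg_lt_zero.2 pi_pos, pi_pos.le⟩
  constructor
  · intro y₀ hy₀
    have himpact : (y₀ * tan α, y₀) = (y₀ / cos α * sin α, y₀ / cos α * cos α) := by
      rw [tan_eq_sin_div_cos]; ext <;> field_simp
    rw [himpact, azimuth_mul_sin_mul_cos (div_pos hy₀ hcos) hαmem, abs_neg, abs_of_pos hα0]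
    exact hαCVA
  · intro T hT
    refine ⟨v * sin α / T, by positivity, fun y₀ hy₀ hy₀δ => ⟨0, ?_⟩⟩
    have hφ : φdot 0 y₀ = -(v * sin α / y₀) := by
      rw [hφdot, hu]; simp only [Prod.neg_mk]; field_simp; ring
    rw [hφ, haz_ahead y₀ hy₀]
    refine ⟨⟨neg_lt_zero.2 hCVA.1, hCVA.1⟩, ?_, Or.inr ⟨?_, neg_nonpos.2 hCVA.1.le⟩⟩
    · rwa [abs_neg, abs_of_pos (by positivity), lt_div_comm₀ hT hy₀]
    · rw [neg_lt_zero]; positivity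
end
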